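/- arXiv:1809.05745 — 2 statements merged into one kernel-verified Lean document; each statement's English description precedes it below -/
import Mathlib

section
/- Suppose F is nonempty and {A, B} is a bipartition of O with Q(A) ≤ p_max and Q(B) ≤ p_max. Then there exists a feasible schedule with makespan exactly 2·p_max + P(F); moreover every feasible schedule has makespan at least 2·p_max + P(F), so this schedule is optimal. -/
open Finset

noncomputable section

/-- Processing time of a job: `p` on flow-shop jobs, `q` otherwise. -/
def jobTime {J : Type*} [DecidableEq J] (F : Finset J) (p q : J → ℝ) (j : J) : ℝ :=
  if j ∈ F then p j else q j

/-- Feasibility of a schedule given by start times `S j i` of job `j` on machine `i`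
(machines `M1, M2, M3` are machines `0, 1, 2`):
all start times are nonnegative, on each machine the open processing intervals of
distinct jobs are pairwise disjoint, for each job the open processing intervals on the
three machines are pairwise disjoint, and each flow-shop job goes through
`M1`, `M2`, `M3` in this order. -/
def Feasible {J : Type*} [DecidableEq J] (F O : Finset J) (p q : J → ℝ)
    (S : J → Fin 3 → ℝ) : Prop :=
  (∀ j ∈ F ∪ O, ∀ i : Fin 3, 0 ≤ S j i) ∧
  (∀ i : Fin 3, ∀ j ∈ F ∪ O, ∀ k ∈ F ∪ O, j ≠ k →
    S j i + jobTime F p q j ≤ S k i ∨ S k i + jobTime F p q k ≤ S j i) ∧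
  (∀ j ∈ F ∪ O, ∀ i i' : Fin 3, i ≠ i' →
    S j i + jobTime F p q j ≤ S j i' ∨ S j i' + jobTime F p q j ≤ S j i) ∧
  (∀ j ∈ F, S j 0 + p j ≤ S j 1 ∧ S j 1 + p j ≤ S j 2)

/-- Makespan: supremum of all completion times of the jobs of `F ∪ O`. -/
def makespan {J : Type*} [DecidableEq J] (F O : Finset J) (p q : J → ℝ)
    (S : J → Fin 3 → ℝ) : ℝ :=
  sSup {x : ℝ | ∃ j ∈ F ∪ O, ∃ i : Fin 3, x = S j i + jobTime F p q j}

/-! Flow-shop jobs pass `M1, M2, M3` back to back, so the longest one, `m`, forces a lower bound: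
every other flow-shop job is handled on `M2` either before `m`, and then also on `M1` before `m`
reaches `M2`, or after `m`, and then also on `M3` after `m` leaves `M2`. Hence `M1` is busy for
`p m` plus the first group before `m` starts on `M2`, and `M3` is busy for `p m` plus the second
group after `m` finishes on `M2`, giving `2 p_max + P(F)`.

The bound is attained by three blocks of jobs, `F`, `A` and `B`, each processed back to back
and rotated through the machines so that two blocks never share a machine at the same time. -/

def NonOverlapping {ι : Type*} (σ t : ι → ℝ) (j k : ι) : Prop :=
  σ j + t j ≤ σ k ∨ σ k + t k ≤ σ j

section Intervals

variable {ι : Type*} {σ t : ι → ℝ}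

theorem NonOverlapping.add_le_of_le {j k : ι} (h : NonOverlapping σ t j k) (hk : 0 < t k)
    (hjk : σ j ≤ σ k) : σ j + t j ≤ σ k :=
  h.resolve_right fun hkj => by linarith

theorem sum_le_sub_of_nonOverlapping (Z : Finset ι) {a b : ℝ} (hab : a ≤ b)
    (ht : ∀ j ∈ Z, 0 < t j) (ha : ∀ j ∈ Z, a ≤ σ j) (hb : ∀ j ∈ Z, σ j + t j ≤ b)
    (hZ : (Z : Set ι).Pairwise (NonOverlapping σ t)) : ∑ j ∈ Z, t j ≤ b - a := by
  classical
  induction Z using Finset.strongInduction generalizing b with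
  | H Z ih =>
    rcases Z.eq_empty_or_nonempty with rfl | hne
    · simpa using hab
    obtain ⟨z, hz, hzmax⟩ := Z.exists_max_image σ hne
    -- the job started last leaves the others within `[a, σ z]`
    have hrest : ∑ j ∈ Z.erase z, t j ≤ σ z - a :=
      ih _ (erase_ssubset hz) (ha z hz) (fun j hj => ht j (mem_of_mem_erase hj))
        (fun j hj => ha j (mem_of_mem_erase hj))
        (fun j hj => (hZ (mem_of_mem_erase hj) hz (ne_of_mem_erase hj)).add_le_of_le (ht z hz)
          (hzmax j (mem_of_mem_erase hj)))
        (hZ.mono (coe_subset.2 (erase_subset z Z)))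
    rw [← sum_erase_add Z t hz]
    linarith [hb z hz]

variable [DecidableEq ι]

theorem exists_nonOverlapping_offsets (s : Finset ι) (ht : ∀ j ∈ s, 0 ≤ t j) :
    ∃ o : ι → ℝ, (∀ j ∈ s, 0 ≤ o j ∧ o j + t j ≤ ∑ k ∈ s, t k) ∧
      (s : Set ι).Pairwise (NonOverlapping o t) := by
  induction s using Finset.induction_on with
  | empty => exact ⟨0, by simp, by simp⟩
  | insert a s ha ih =>
    obtain ⟨o, ho, hdisj⟩ := ih fun j hj => ht j (mem_insert_of_mem hj)
    have hs : 0 ≤ ∑ k ∈ s, t k := sum_nonneg fun j hj => ht j (mem_insert_of_mem hj)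
    have ha' : 0 ≤ t a := ht a (mem_insert_self a s)
    have hupd : ∀ j ∈ s, Function.update o a (∑ k ∈ s, t k) j = o j := fun j hj =>
      Function.update_of_ne (ne_of_mem_of_not_mem hj ha) _ _
    refine ⟨Function.update o a (∑ k ∈ s, t k), ?_, ?_⟩
    · intro j hj
      rw [sum_insert ha]
      rcases mem_insert.1 hj with rfl | hj
      · simp only [Function.update_self]
        constructor <;> linarith
      · rw [hupd j hj]
        constructor <;> linarith [ho j hj]
    · rw [coe_insert, Set.pairwise_insert]
      refine ⟨fun j hj k hk hjk => ?_, fun j hj _ => ?_⟩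
      · simpa only [NonOverlapping, hupd j hj, hupd k hk] using hdisj hj hk hjk
      · have hj' : j ∈ s := hj
        simp only [NonOverlapping, Function.update_self, hupd j hj']
        exact ⟨Or.inr (ho j hj').2, Or.inl (ho j hj').2⟩

end Intervals

section Schedules

variable {J : Type*} [DecidableEq J] {F O : Finset J} {p q : J → ℝ} {S : J → Fin 3 → ℝ}

theorem jobTime_of_mem {j : J} (hj : j ∈ F) : jobTime F p q j = p j :=
  if_pos hj

theorem jobTime_of_notMem {j : J} (hj : j ∉ F) : jobTime F p q j = q j :=
  if_neg hj

theorem le_makespan {j : J} (hj : j ∈ F ∪ O) (i : Fin 3) :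
    S j i + jobTime F p q j ≤ makespan F O p q S := by
  refine le_csSup ?_ ⟨j, hj, i, rfl⟩
  refine ((((F ∪ O) ×ˢ (univ : Finset (Fin 3))).finite_toSet.image
    fun x => S x.1 x.2 + jobTime F p q x.1).bddAbove).mono ?_
  rintro x ⟨k, hk, i', rfl⟩
  exact ⟨(k, i'), by simpa using hk, rfl⟩

theorem makespan_le {T : ℝ} (hne : (F ∪ O).Nonempty)
    (hT : ∀ j ∈ F ∪ O, ∀ i, S j i + jobTime F p q j ≤ T) : makespan F O p q S ≤ T := by
  obtain ⟨j, hj⟩ := hne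
  refine csSup_le ⟨_, j, hj, 0, rfl⟩ ?_
  rintro x ⟨k, hk, i, rfl⟩
  exact hT k hk i

theorem Feasible.nonOverlapping_flow (hS : Feasible F O p q S) (i : Fin 3) :
    (F : Set J).Pairwise (NonOverlapping (S · i) p) := fun j hj k hk hjk => by
  simpa only [NonOverlapping, jobTime_of_mem hj, jobTime_of_mem hk] using
    hS.2.1 i j (mem_union_left O hj) k (mem_union_left O hk) hjk

theorem add_le_makespan_of_mem {j : J} (hj : j ∈ F) (i : Fin 3) :
    S j i + p j ≤ makespan F O p q S := by
  simpa only [jobTime_of_mem hj] using le_makespan (S := S) (mem_union_left O hj) i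

variable (hS : Feasible F O p q S) (hp : ∀ j ∈ F, 0 < p j) {m : J} (hm : m ∈ F)
include hS hp hm

theorem Feasible.add_sum_before_le :
    p m + ∑ j ∈ F with S j 1 < S m 1, p j ≤ S m 1 := by
  have hsub : insert m (F.filter fun j => S j 1 < S m 1) ⊆ F :=
    insert_subset hm (filter_subset _ _)
  have hbefore : ∀ j ∈ insert m (F.filter fun j => S j 1 < S m 1), S j 0 + p j ≤ S m 1 := by
    intro j hj
    rcases mem_insert.1 hj with rfl | hj
    · exact (hS.2.2.2 j hm).1
    obtain ⟨hjF, hlt⟩ := mem_filter.1 hj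
    have := (hS.nonOverlapping_flow 1 hjF hm (by rintro rfl; exact hlt.false)).add_le_of_le
      (hp m hm) hlt.le
    linarith [(hS.2.2.2 j hjF).1, hp j hjF]
  have := sum_le_sub_of_nonOverlapping _ (hS.1 m (mem_union_left O hm) 1)
    (fun j hj => hp j (hsub hj)) (fun j hj => hS.1 j (mem_union_left O (hsub hj)) 0) hbefore
    ((hS.nonOverlapping_flow 0).mono (coe_subset.2 hsub))
  rwa [sum_insert fun h => (mem_filter.1 h).2.false, sub_zero] at this

theorem Feasible.add_sum_after_le :
    S m 1 + p m + ∑ j ∈ F with ¬S j 1 < S m 1, p j ≤ makespan F O p q S := by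
  have hafter : ∀ j ∈ F.filter fun j => ¬S j 1 < S m 1, S m 1 + p m ≤ S j 2 := by
    intro j hj
    obtain ⟨hjF, hge⟩ := mem_filter.1 hj
    rcases eq_or_ne m j with rfl | hmj
    · exact (hS.2.2.2 m hm).2
    have := (hS.nonOverlapping_flow 1 hm hjF hmj).add_le_of_le (hp j hjF) (not_lt.1 hge)
    linarith [(hS.2.2.2 j hjF).2, hp j hjF]
  have hmem : m ∈ F.filter fun j => ¬S j 1 < S m 1 := mem_filter.2 ⟨hm, lt_irrefl _⟩
  have hm_end : S m 1 + p m ≤ makespan F O p q S := (hafter m hmem).trans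
    ((le_add_of_nonneg_right (hp m hm).le).trans (add_le_makespan_of_mem hm 2))
  have := sum_le_sub_of_nonOverlapping _ hm_end (fun j hj => hp j (mem_filter.1 hj).1) hafter
    (fun j hj => add_le_makespan_of_mem (mem_filter.1 hj).1 2)
    ((hS.nonOverlapping_flow 2).mono (coe_subset.2 (filter_subset _ F)))
  linarith

theorem Feasible.two_mul_add_sum_le_makespan :
    2 * p m + ∑ j ∈ F, p j ≤ makespan F O p q S := by
  rw [← sum_filter_add_sum_filter_not F (fun j => S j 1 < S m 1)]
  linarith [hS.add_sum_before_le hp hm, hS.add_sum_after_le hp hm]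

end Schedules

section BlockSchedules

variable {J κ : Type*} [DecidableEq J] [DecidableEq κ] {F O : Finset J} {p q : J → ℝ}

/-- Block `cls j = c` of jobs is processed back to back on machine `i` from time `start c i` on. -/
theorem exists_feasible_of_blocks (cls : J → κ) (start : κ → Fin 3 → ℝ) (len : κ → ℝ) (d : ℝ)
    (ht : ∀ j ∈ F ∪ O, 0 ≤ jobTime F p q j ∧ jobTime F p q j ≤ d)
    (hlen : ∀ c, ∑ j ∈ (F ∪ O).filter (cls · = c), jobTime F p q j ≤ len c)
    (hstart : ∀ c i, 0 ≤ start c i)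
    (hmachine : ∀ i, Pairwise (NonOverlapping (start · i) len))
    (hjob : ∀ c, Pairwise (NonOverlapping (start c) fun _ => d))
    (hflow : ∀ j ∈ F,
      start (cls j) 0 + d ≤ start (cls j) 1 ∧ start (cls j) 1 + d ≤ start (cls j) 2) :
    ∃ S, Feasible F O p q S ∧
      ∀ j ∈ F ∪ O, ∀ i, S j i + jobTime F p q j ≤ start (cls j) i + len (cls j) := by
  set t := jobTime F p q
  choose o ho hdisj using fun c => exists_nonOverlapping_offsets ((F ∪ O).filter (cls · = c))
    fun j hj => (ht j (mem_filter.1 hj).1).1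
  have hmem : ∀ j ∈ F ∪ O, j ∈ (F ∪ O).filter (cls · = cls j) := fun j hj =>
    mem_filter.2 ⟨hj, rfl⟩
  have hwin : ∀ j ∈ F ∪ O, 0 ≤ o (cls j) j ∧ o (cls j) j + t j ≤ len (cls j) := fun j hj =>
    ⟨(ho _ j (hmem j hj)).1, (ho _ j (hmem j hj)).2.trans (hlen _)⟩
  refine ⟨fun j i => start (cls j) i + o (cls j) j, ⟨?_, ?_, ?_, ?_⟩, ?_⟩
  · intro j hj i
    linarith [hstart (cls j) i, (hwin j hj).1]
  · intro i j hj k hk hjk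
    by_cases hc : cls j = cls k
    · have hk' : k ∈ (F ∪ O).filter (cls · = cls j) := mem_filter.2 ⟨hk, hc.symm⟩
      simp only [← hc]
      rcases hdisj (cls j) (hmem j hj) hk' hjk with h | h
      · exact Or.inl (by linarith)
      · exact Or.inr (by linarith)
    · rcases hmachine i hc with h | h
      · exact Or.inl (by linarith [(hwin j hj).2, (hwin k hk).1])
      · exact Or.inr (by linarith [(hwin j hj).1, (hwin k hk).2])
  · intro j hj i i' hii'
    rcases hjob (cls j) hii' with h | h
    · exact Or.inl (by linarith [(ht j hj).2])
    · exact Or.inr (by linarith [(ht j hj).2])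
  · intro j hj
    have hpd : p j ≤ d := by
      simpa only [t, jobTime_of_mem hj] using (ht j (mem_union_left O hj)).2
    constructor <;> linarith [hflow j hj]
  · intro j hj i
    linarith [(hwin j hj).2]

end BlockSchedules

/-- Rows are the blocks `F, A, B`, columns the machines `M1, M2, M3`; the machines run the blocks
in the orders `F, B, A`, `A, F, B` and `B, A, F`. Here `P = P(F)` and `d` bounds every job and
both open-shop blocks. -/
def rotationStart (d P : ℝ) : Fin 3 → Fin 3 → ℝ :=
  ![![0, d, 2 * d], ![P + d, 0, d], ![P, P + d, 0]]

section Rotation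

variable {d P : ℝ}

theorem rotationStart_nonneg (hd : 0 ≤ d) (hP : 0 ≤ P) (c i : Fin 3) :
    0 ≤ rotationStart d P c i := by
  fin_cases c <;> fin_cases i <;> simp [rotationStart] <;> linarith

theorem rotationStart_nonOverlapping_machine (hd : 0 ≤ d) (hP : 0 ≤ P) (i : Fin 3) :
    Pairwise (NonOverlapping (rotationStart d P · i) ![P, d, d]) := by
  intro c c' hcc'
  fin_cases i <;> fin_cases c <;> fin_cases c' <;>
    simp [rotationStart, NonOverlapping] at hcc' ⊢ <;>
    first | exact Or.inl (by linarith) | exact Or.inr (by linarith)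

theorem rotationStart_nonOverlapping_job (hd : 0 ≤ d) (hdP : d ≤ P) (c : Fin 3) :
    Pairwise (NonOverlapping (rotationStart d P c) fun _ => d) := by
  intro i i' hii'
  fin_cases c <;> fin_cases i <;> fin_cases i' <;>
    simp [rotationStart, NonOverlapping] at hii' ⊢ <;>
    first | exact Or.inl (by linarith) | exact Or.inr (by linarith)

theorem rotationStart_add_le (hd : 0 ≤ d) (hP : 0 ≤ P) (c i : Fin 3) :
    rotationStart d P c i + ![P, d, d] c ≤ 2 * d + P := by
  fin_cases c <;> fin_cases i <;> simp [rotationStart] <;> linarith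

end Rotation

section RotationSchedule

variable {J : Type*} [DecidableEq J] {F O : Finset J} {p q : J → ℝ}

def rotationBlock (F A : Finset J) (j : J) : Fin 3 :=
  if j ∈ F then 0 else if j ∈ A then 1 else 2

theorem rotationBlock_spec {A B : Finset J} (hAB : A ∪ B = O) {j : J} (hj : j ∈ F ∪ O) :
    j ∈ ![F, A, B] (rotationBlock F A j) ∧
      jobTime F p q j = ![p, q, q] (rotationBlock F A j) j := by
  unfold rotationBlock
  split_ifs with hjF hjA
  · exact ⟨hjF, jobTime_of_mem hjF⟩
  · exact ⟨hjA, jobTime_of_notMem hjF⟩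
  · rw [← hAB, mem_union, mem_union] at hj
    exact ⟨by simpa [hjF, hjA] using hj, jobTime_of_notMem hjF⟩

theorem exists_feasible_rotation (hp : ∀ j ∈ F, 0 ≤ p j) (hq : ∀ j ∈ O, 0 ≤ q j)
    {A B : Finset J} (hAB : A ∪ B = O) {d : ℝ} (hpd : ∀ j ∈ F, p j ≤ d)
    (hdP : d ≤ ∑ j ∈ F, p j) (hA : ∑ j ∈ A, q j ≤ d) (hB : ∑ j ∈ B, q j ≤ d) :
    ∃ S, Feasible F O p q S ∧
      ∀ j ∈ F ∪ O, ∀ i, S j i + jobTime F p q j ≤ 2 * d + ∑ j ∈ F, p j := by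
  set P := ∑ j ∈ F, p j
  have hqA : ∀ j ∈ A, 0 ≤ q j := fun j hj => hq j (hAB ▸ mem_union_left B hj)
  have hqB : ∀ j ∈ B, 0 ≤ q j := fun j hj => hq j (hAB ▸ mem_union_right A hj)
  have hd : 0 ≤ d := (sum_nonneg hqA).trans hA
  have hP : 0 ≤ P := hd.trans hdP
  have hnonneg : ∀ c, ∀ j ∈ ![F, A, B] c, 0 ≤ ![p, q, q] c j := by
    intro c; fin_cases c
    exacts [hp, hqA, hqB]
  have hsum : ∀ c, ∑ j ∈ ![F, A, B] c, ![p, q, q] c j ≤ ![P, d, d] c := by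
    intro c; fin_cases c
    exacts [le_rfl, hA, hB]
  have hlen : ∀ c, ∑ j ∈ (F ∪ O).filter (rotationBlock F A · = c), jobTime F p q j ≤
      ![P, d, d] c := by
    intro c
    have hblock : ∀ j ∈ (F ∪ O).filter (rotationBlock F A · = c),
        j ∈ ![F, A, B] c ∧ jobTime F p q j = ![p, q, q] c j := by
      intro j hj
      obtain ⟨hjFO, rfl⟩ := mem_filter.1 hj
      exact rotationBlock_spec hAB hjFO
    calc _ = ∑ j ∈ (F ∪ O).filter (rotationBlock F A · = c), ![p, q, q] c j :=
          sum_congr rfl fun j hj => (hblock j hj).2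
      _ ≤ ∑ j ∈ ![F, A, B] c, ![p, q, q] c j :=
          sum_le_sum_of_subset_of_nonneg (fun j hj => (hblock j hj).1) fun j hj _ =>
            hnonneg c j hj
      _ ≤ ![P, d, d] c := hsum c
  have ht : ∀ j ∈ F ∪ O, 0 ≤ jobTime F p q j ∧ jobTime F p q j ≤ d := by
    intro j hj
    obtain ⟨hjc, htj⟩ := rotationBlock_spec (p := p) (q := q) hAB hj
    rw [htj]
    refine ⟨hnonneg _ j hjc, ?_⟩
    generalize rotationBlock F A j = c at hjc
    fin_cases c
    exacts [hpd j hjc, (single_le_sum hqA hjc).trans hA, (single_le_sum hqB hjc).trans hB]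
  obtain ⟨S, hS, hle⟩ := exists_feasible_of_blocks (rotationBlock F A) (rotationStart d P)
    ![P, d, d] d ht hlen (rotationStart_nonneg hd hP) (rotationStart_nonOverlapping_machine hd hP)
    (rotationStart_nonOverlapping_job hd hdP)
    (fun j hj => by simp [rotationBlock, hj, rotationStart, two_mul])
  exact ⟨S, hS, fun j hj i => (hle j hj i).trans (rotationStart_add_le hd hP _ _)⟩

end RotationSchedule

theorem stmt1_general {J : Type*} [DecidableEq J] (F O : Finset J) (p q : J → ℝ)
    (hp : ∀ j ∈ F, 0 < p j) (hq : ∀ j ∈ O, 0 < q j)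
    (hF : F.Nonempty)
    (A B : Finset J) (hABunion : A ∪ B = O)
    (hA : (∑ j ∈ A, q j) ≤ F.sup' hF p) (hB : (∑ j ∈ B, q j) ≤ F.sup' hF p) :
    (∃ S : J → Fin 3 → ℝ, Feasible F O p q S ∧
        makespan F O p q S = 2 * F.sup' hF p + ∑ j ∈ F, p j) ∧
    (∀ S : J → Fin 3 → ℝ, Feasible F O p q S →
        2 * F.sup' hF p + (∑ j ∈ F, p j) ≤ makespan F O p q S) := by
  obtain ⟨m, hm, hpm⟩ := F.exists_mem_eq_sup' hF p
  have lower : ∀ S, Feasible F O p q S → 2 * F.sup' hF p + ∑ j ∈ F, p j ≤ makespan F O p q S :=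
    fun S hS => hpm ▸ hS.two_mul_add_sum_le_makespan hp hm
  refine ⟨?_, lower⟩
  obtain ⟨S, hS, hle⟩ := exists_feasible_rotation (fun j hj => (hp j hj).le)
    (fun j hj => (hq j hj).le) hABunion (fun j hj => le_sup' p hj)
    (hpm ▸ single_le_sum (fun j hj => (hp j hj).le) hm) hA hB
  exact ⟨S, hS, le_antisymm (makespan_le (hF.mono subset_union_left) hle) (lower S hS)⟩

/-- If `{A, B}` is a bipartition of `O` with `Q(A) ≤ p_max` and `Q(B) ≤ p_max`, then
there is a feasible schedule of makespan exactly `2 p_max + P(F)`, and every feasible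
schedule has makespan at least `2 p_max + P(F)`. -/
theorem stmt1 {J : Type*} [DecidableEq J] (F O : Finset J) (p q : J → ℝ)
    (hdisj : Disjoint F O)
    (hp : ∀ j ∈ F, 0 < p j) (hq : ∀ j ∈ O, 0 < q j)
    (hF : F.Nonempty)
    (A B : Finset J) (hABunion : A ∪ B = O) (hABdisj : Disjoint A B)
    (hA : (∑ j ∈ A, q j) ≤ F.sup' hF p) (hB : (∑ j ∈ B, q j) ≤ F.sup' hF p) :
    (∃ S : J → Fin 3 → ℝ, Feasible F O p q S ∧
        makespan F O p q S = 2 * F.sup' hF p + ∑ j ∈ F, p j) ∧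
    (∀ S : J → Fin 3 → ℝ, Feasible F O p q S →
        2 * F.sup' hF p + (∑ j ∈ F, p j) ≤ makespan F O p q S) :=
  stmt1_general F O p q hp hq hF A B hABunion hA hB

end
end

section
/- Suppose F is nonempty, p_max ≥ q_max, and {A, B} is a bipartition of O with Q(B) ≤ p_max < Q(A). Then there exists a feasible schedule with makespan exactly P(F) + p_max + Q(A) = P(F) + Q(O) + p_max − Q(B). -/
/-!
Each of the three job classes `F`, `A`, `B` is processed as one block, its jobs laid end to end
in the same order on every machine; the blocks have lengths `P(F)`, `Q(A)`, `Q(B)`.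
On `M1` the blocks run `F, A, B`; on `M2` they run `B`, idle up to `p_max`, then `F, A`;
on `M3` they run `A, B`, idle up to `p_max + Q(A)`, then `F`.
Every job is at most `p_max ≤ min(P(F), Q(A))` long, so the three operations of a job, which
start at least `p_max` apart, never overlap; `Q(B) ≤ p_max` keeps the `B`-block clear of the
idle gaps; and the last flow-shop job finishes on `M3` at `P(F) + p_max + Q(A)`.
-/
open Finset

noncomputable section

theorem jobTime_nonneg {J : Type*} [DecidableEq J] {F O : Finset J} {p q : J → ℝ}
    (hp : ∀ j ∈ F, 0 ≤ p j) (hq : ∀ j ∈ O, 0 ≤ q j) {j : J} (hj : j ∈ F ∪ O) :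
    0 ≤ jobTime F p q j := by
  unfold jobTime
  split_ifs with hjF
  · exact hp j hjF
  · exact hq j ((mem_union.mp hj).resolve_left hjF)

theorem jobTime_le_sup' {J : Type*} [DecidableEq J] {F O : Finset J} {p q : J → ℝ}
    (hF : F.Nonempty) (hO : O.Nonempty) (hpq : O.sup' hO q ≤ F.sup' hF p) {j : J}
    (hj : j ∈ F ∪ O) : jobTime F p q j ≤ F.sup' hF p := by
  unfold jobTime
  split_ifs with hjF
  · exact le_sup' p hjF
  · exact (le_sup' q ((mem_union.mp hj).resolve_left hjF)).trans hpq

theorem exists_consecutive_packing {J : Type*} [DecidableEq J] (s : Finset J) (w : J → ℝ)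
    (hw : ∀ j ∈ s, 0 ≤ w j) :
    ∃ σ : J → ℝ, (∀ j ∈ s, 0 ≤ σ j ∧ σ j + w j ≤ ∑ k ∈ s, w k) ∧
      (∀ j ∈ s, ∀ k ∈ s, j ≠ k → σ j + w j ≤ σ k ∨ σ k + w k ≤ σ j) ∧
      (s.Nonempty → ∃ j ∈ s, σ j + w j = ∑ k ∈ s, w k) := by
  induction s using Finset.induction_on with
  | empty => exact ⟨0, by simp, by simp, by simp⟩
  | @insert a t ha ih =>
    obtain ⟨σ, hbound, hdisj, -⟩ := ih fun j hj => hw j (mem_insert_of_mem hj)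
    have hsum : ∑ k ∈ insert a t, w k = ∑ k ∈ t, w k + w a := by rw [sum_insert ha, add_comm]
    have hwt : 0 ≤ ∑ k ∈ t, w k := sum_nonneg fun k hk => hw k (mem_insert_of_mem hk)
    have hold : ∀ j ∈ insert a t, j ≠ a →
        Function.update σ a (∑ k ∈ t, w k) j = σ j ∧ j ∈ t := fun j hj hja =>
      ⟨Function.update_of_ne hja _ _, (mem_insert.mp hj).resolve_left hja⟩
    refine ⟨Function.update σ a (∑ k ∈ t, w k), fun j hj => ?_, fun j hj k hk hjk => ?_,
      fun _ => ⟨a, mem_insert_self a t, by simp [hsum]⟩⟩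
    · rw [hsum]
      rcases eq_or_ne j a with rfl | hja
      · simpa using hwt
      · obtain ⟨hσj, hjt⟩ := hold j hj hja
        rw [hσj]
        have := hbound j hjt
        constructor <;> linarith [hw a (mem_insert_self a t)]
    · rcases eq_or_ne j a with rfl | hja
      · obtain ⟨hσk, hkt⟩ := hold k hk hjk.symm
        simpa [hσk] using Or.inr (hbound k hkt).2
      rcases eq_or_ne k a with rfl | hka
      · obtain ⟨hσj, hjt⟩ := hold j hj hja
        simpa [hσj] using Or.inl (hbound j hjt).2
      obtain ⟨hσj, hjt⟩ := hold j hj hja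
      obtain ⟨hσk, hkt⟩ := hold k hk hka
      simpa [hσj, hσk] using hdisj j hjt k hkt hjk

theorem makespan_eq_of_forall_le_of_exists_eq {J : Type*} [DecidableEq J] {F O : Finset J}
    {p q : J → ℝ} {S : J → Fin 3 → ℝ} {M : ℝ}
    (hle : ∀ j ∈ F ∪ O, ∀ i, S j i + jobTime F p q j ≤ M)
    (hM : ∃ j ∈ F ∪ O, ∃ i, S j i + jobTime F p q j = M) :
    makespan F O p q S = M := by
  obtain ⟨j, hj, i, hji⟩ := hM
  exact IsGreatest.csSup_eq ⟨⟨j, hj, i, hji.symm⟩, by rintro _ ⟨k, hk, i', rfl⟩; exact hle k hk i'⟩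

theorem exists_feasible_block_schedule {J ι : Type*} [DecidableEq J] [DecidableEq ι]
    (F O : Finset J) (p q : J → ℝ) (cls : J → ι) (start : ι → Fin 3 → ℝ) (load : ι → ℝ) (m : ℝ)
    (hload : ∀ c, ∑ k ∈ F ∪ O with cls k = c, jobTime F p q k = load c)
    (ht0 : ∀ j ∈ F ∪ O, 0 ≤ jobTime F p q j) (htm : ∀ j ∈ F ∪ O, jobTime F p q j ≤ m)
    (hstart : ∀ c i, 0 ≤ start c i)
    (hblocks : ∀ i c c', c ≠ c' →
      start c i + load c ≤ start c' i ∨ start c' i + load c' ≤ start c i)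
    (hrow : ∀ c i i', i ≠ i' → start c i + m ≤ start c i' ∨ start c i' + m ≤ start c i)
    (hflow : ∀ j ∈ F,
      start (cls j) 0 + m ≤ start (cls j) 1 ∧ start (cls j) 1 + m ≤ start (cls j) 2) :
    ∃ S : J → Fin 3 → ℝ, Feasible F O p q S ∧
      (∀ j ∈ F ∪ O, ∀ i, S j i + jobTime F p q j ≤ start (cls j) i + load (cls j)) ∧
      (∀ j ∈ F ∪ O, ∀ i, ∃ k ∈ F ∪ O,
        S k i + jobTime F p q k = start (cls j) i + load (cls j)) := by
  set t := jobTime F p q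
  choose σ hσ hσdisj hσlast using fun c => exists_consecutive_packing
    ({k ∈ F ∪ O | cls k = c}) t fun j hj => ht0 j (mem_filter.mp hj).1
  have hbound : ∀ j ∈ F ∪ O, 0 ≤ σ (cls j) j ∧ σ (cls j) j + t j ≤ load (cls j) :=
    fun j hj => hload (cls j) ▸ hσ (cls j) j (mem_filter.mpr ⟨hj, rfl⟩)
  refine ⟨fun j i => start (cls j) i + σ (cls j) j, ⟨?_, ?_, ?_, ?_⟩, ?_, ?_⟩
  · exact fun j hj i => add_nonneg (hstart _ i) (hbound j hj).1
  · intro i j hj k hk hjk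
    by_cases hc : cls j = cls k
    · simp only [← hc]
      rcases hσdisj (cls j) j (mem_filter.mpr ⟨hj, rfl⟩) k (mem_filter.mpr ⟨hk, hc.symm⟩) hjk
        with h | h <;> [left; right] <;> linarith
    · rcases hblocks i _ _ hc with h | h <;> [left; right] <;>
        linarith [hbound j hj, hbound k hk]
  · intro j hj i i' hii'
    rcases hrow (cls j) i i' hii' with h | h <;> [left; right] <;> linarith [htm j hj]
  · intro j hj
    have htp : t j = p j := if_pos hj
    obtain ⟨h01, h12⟩ := hflow j hj
    constructor <;> linarith [htm j (mem_union_left O hj)]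
  · exact fun j hj i => by linarith [hbound j hj]
  · intro j hj i
    obtain ⟨k, hk, hkσ⟩ := hσlast (cls j) ⟨j, mem_filter.mpr ⟨hj, rfl⟩⟩
    obtain ⟨hk, hkc⟩ := mem_filter.mp hk
    refine ⟨k, hk, ?_⟩
    simp only [hkc, ← hload (cls j)]
    linarith

/-- Row `c` is the job class (`0`: flow shop, `1`: `A`, `2`: `B`), column `i` the machine. -/
def mixedShopStart (P pmax QA : ℝ) : Fin 3 → Fin 3 → ℝ :=
  ![![0, pmax, pmax + QA], ![P, P + pmax, 0], ![P + QA, 0, QA]]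

theorem mixedShopStart_nonneg {P pmax QA : ℝ} (hpmax : 0 ≤ pmax) (hpmaxP : pmax ≤ P)
    (hpmaxQA : pmax ≤ QA) (c i : Fin 3) : 0 ≤ mixedShopStart P pmax QA c i := by
  fin_cases c <;> fin_cases i <;> simp [mixedShopStart] <;> linarith

theorem mixedShopStart_blocks_disjoint {P pmax QA QB : ℝ} (hpmax : 0 ≤ pmax) (hpmaxP : pmax ≤ P)
    (hpmaxQA : pmax ≤ QA) (hQB : QB ≤ pmax) (i c c' : Fin 3) (hcc' : c ≠ c') :
    mixedShopStart P pmax QA c i + ![P, QA, QB] c ≤ mixedShopStart P pmax QA c' i ∨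
      mixedShopStart P pmax QA c' i + ![P, QA, QB] c' ≤ mixedShopStart P pmax QA c i := by
  fin_cases i <;> fin_cases c <;> fin_cases c' <;> simp [mixedShopStart] at hcc' ⊢ <;>
    first | (left; linarith) | (right; linarith)

theorem mixedShopStart_row_separated {P pmax QA : ℝ} (hpmax : 0 ≤ pmax) (hpmaxP : pmax ≤ P)
    (hpmaxQA : pmax ≤ QA) (c i i' : Fin 3) (hii' : i ≠ i') :
    mixedShopStart P pmax QA c i + pmax ≤ mixedShopStart P pmax QA c i' ∨
      mixedShopStart P pmax QA c i' + pmax ≤ mixedShopStart P pmax QA c i := by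
  fin_cases c <;> fin_cases i <;> fin_cases i' <;> simp [mixedShopStart] at hii' ⊢ <;>
    first | (left; linarith) | (right; linarith)

theorem mixedShopStart_add_le {P pmax QA QB : ℝ} (hpmax : 0 ≤ pmax) (hpmaxP : pmax ≤ P)
    (hpmaxQA : pmax ≤ QA) (hQB : QB ≤ pmax) (c i : Fin 3) :
    mixedShopStart P pmax QA c i + ![P, QA, QB] c ≤ P + pmax + QA := by
  fin_cases c <;> fin_cases i <;> simp [mixedShopStart] <;> linarith

def mixedShopClass {J : Type*} [DecidableEq J] (F A : Finset J) (j : J) : Fin 3 :=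
  if j ∈ F then 0 else if j ∈ A then 1 else 2

theorem sum_jobTime_mixedShopClass {J : Type*} [DecidableEq J] {F A B : Finset J} (p q : J → ℝ)
    (hF : Disjoint F (A ∪ B)) (hAB : Disjoint A B) (c : Fin 3) :
    ∑ k ∈ F ∪ (A ∪ B) with mixedShopClass F A k = c, jobTime F p q k =
      ![∑ j ∈ F, p j, ∑ j ∈ A, q j, ∑ j ∈ B, q j] c := by
  have hAF : ∀ j ∈ A, j ∉ F := fun j hj hjF => disjoint_left.mp hF hjF (mem_union_left B hj)
  have hBF : ∀ j ∈ B, j ∉ F := fun j hj hjF => disjoint_left.mp hF hjF (mem_union_right A hj)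
  have hBA : ∀ j ∈ B, j ∉ A := fun j hj hjA => disjoint_left.mp hAB hjA hj
  match c with
  | 0 =>
    rw [show {k ∈ F ∪ (A ∪ B) | mixedShopClass F A k = 0} = F by
      ext k; grind [mixedShopClass]]
    exact sum_congr rfl fun k hk => if_pos hk
  | 1 =>
    rw [show {k ∈ F ∪ (A ∪ B) | mixedShopClass F A k = 1} = A by
      ext k; grind [mixedShopClass]]
    exact sum_congr rfl fun k hk => if_neg (hAF k hk)
  | 2 =>
    rw [show {k ∈ F ∪ (A ∪ B) | mixedShopClass F A k = 2} = B by
      ext k; grind [mixedShopClass]]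
    exact sum_congr rfl fun k hk => if_neg (hBF k hk)

/-- If `p_max ≥ q_max` and `{A, B}` is a bipartition of `O` with `Q(B) ≤ p_max < Q(A)`,
then there is a feasible schedule of makespan exactly
`P(F) + p_max + Q(A) = P(F) + Q(O) + p_max − Q(B)`. -/
theorem stmt5 {J : Type*} [DecidableEq J] (F O : Finset J) (p q : J → ℝ)
    (hdisj : Disjoint F O)
    (hp : ∀ j ∈ F, 0 < p j) (hq : ∀ j ∈ O, 0 < q j)
    (hF : F.Nonempty) (hO : O.Nonempty)
    (hpq : O.sup' hO q ≤ F.sup' hF p)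
    (A B : Finset J) (hABunion : A ∪ B = O) (hABdisj : Disjoint A B)
    (hB : (∑ j ∈ B, q j) ≤ F.sup' hF p) (hA : F.sup' hF p < ∑ j ∈ A, q j) :
    ∃ S : J → Fin 3 → ℝ, Feasible F O p q S ∧
      makespan F O p q S = (∑ j ∈ F, p j) + F.sup' hF p + (∑ j ∈ A, q j) ∧
      (∑ j ∈ F, p j) + F.sup' hF p + (∑ j ∈ A, q j)
        = (∑ j ∈ F, p j) + (∑ j ∈ O, q j) + F.sup' hF p - ∑ j ∈ B, q j := by
  subst hABunion
  set pmax := F.sup' hF p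
  obtain ⟨j₀, hj₀⟩ := hF
  have hpmax : 0 ≤ pmax := (hp j₀ hj₀).le.trans (le_sup' p hj₀)
  have hpmaxP : pmax ≤ ∑ j ∈ F, p j :=
    sup'_le _ _ fun j hj => single_le_sum (fun k hk => (hp k hk).le) hj
  obtain ⟨S, hS, hend, hlast⟩ := exists_feasible_block_schedule F (A ∪ B) p q
    (mixedShopClass F A) (mixedShopStart _ pmax _) _ pmax
    (sum_jobTime_mixedShopClass p q hdisj hABdisj)
    (fun j => jobTime_nonneg (fun k hk => (hp k hk).le) fun k hk => (hq k hk).le)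
    (fun j => jobTime_le_sup' ⟨j₀, hj₀⟩ hO hpq)
    (mixedShopStart_nonneg hpmax hpmaxP hA.le)
    (mixedShopStart_blocks_disjoint hpmax hpmaxP hA.le hB)
    (mixedShopStart_row_separated hpmax hpmaxP hA.le)
    (fun j hj => by simp [mixedShopClass, hj, mixedShopStart, hA.le])
  refine ⟨S, hS, makespan_eq_of_forall_le_of_exists_eq
    (fun j hj i => (hend j hj i).trans (mixedShopStart_add_le hpmax hpmaxP hA.le hB _ _)) ?_,
    by rw [sum_union hABdisj]; ring⟩
  obtain ⟨k, hk, hkend⟩ := hlast j₀ (mem_union_left _ hj₀) 2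
  refine ⟨k, hk, 2, ?_⟩
  rw [hkend, mixedShopClass, if_pos hj₀]
  simp only [mixedShopStart, Matrix.cons_val]
  ring
end
end
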